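/- arXiv:1606.02589 — 6 statements merged into one kernel-verified Lean document; each statement's English description precedes it below -/
import Mathlib

section
/- Let l ≥ 1 be an integer and let ρ, ν, μ, Λ be real numbers with ν + ρ > 0 and ν ≤ μ ≤ Λ. For each j = 1, …, l let a_j, b_j, c_j be real numbers with a_j² ≥ b_j ≥ 0 and c_j ≥ 0, and suppose that a_j²·((Λ − ν) + (μ − ν)) ≤ 2·b_j·√((Λ − ν)·(μ − ν)) + c_j. Then (Σ_{j=1}^{l} (a_j² + b_j)/2)·(Λ − μ)² ≤ 4·(Λ + ρ)·Σ_{j=1}^{l} c_j. -/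
private lemma stmt_1_aux (A B C X Y L : ℝ) (hc' : C ≥ 0)
    (hxy : Y ≤ X) (hL : X ≤ L)
    (h1' : (A - B) * (X - Y) ^ 2 ≤ C * (X - Y))
    (h2' : B * (X - Y) ^ 2 ≤ 2 * C * (X + Y)) (hy : 0 ≤ Y) :
    (A + B) / 2 * (X - Y) ^ 2 ≤ 4 * L * C := by
  nlinarith [mul_nonneg hc' (sub_nonneg.mpr hxy), mul_nonneg hc' (sub_nonneg.mpr hL)]



/-- Algebraic content of Lemma 2.3: if `ν + ρ > 0`, `ν ≤ μ ≤ Λ`, and for each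
`j = 1, …, l` we have `a_j² ≥ b_j ≥ 0`, `c_j ≥ 0` and
`a_j²((Λ − ν) + (μ − ν)) ≤ 2 b_j √((Λ − ν)(μ − ν)) + c_j`, then
`(Σ (a_j² + b_j)/2)(Λ − μ)² ≤ 4(Λ + ρ) Σ c_j`. -/
theorem stmt_1 (l : ℕ) (hl : 1 ≤ l) (ρ ν μ Λ : ℝ)
    (hνρ : ν + ρ > 0) (hνμ : ν ≤ μ) (hμΛ : μ ≤ Λ)
    (a b c : Fin l → ℝ)
    (hab : ∀ j, (a j) ^ 2 ≥ b j) (hb : ∀ j, b j ≥ 0) (hc : ∀ j, c j ≥ 0)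
    (key : ∀ j, (a j) ^ 2 * ((Λ - ν) + (μ - ν)) ≤
      2 * b j * Real.sqrt ((Λ - ν) * (μ - ν)) + c j) :
    (∑ j, ((a j) ^ 2 + b j) / 2) * (Λ - μ) ^ 2 ≤ 4 * (Λ + ρ) * ∑ j, c j := by
  rw [Finset.sum_mul, Finset.mul_sum]
  apply Finset.sum_le_sum
  intro j _
  set x := Λ - ν with hxdef
  set y := μ - ν with hydef
  have hy : 0 ≤ y := by rw [hydef]; linarith
  have hxy : y ≤ x := by rw [hxdef, hydef]; linarith
  have hx : 0 ≤ x := le_trans hy hxy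
  have hsx := Real.sq_sqrt hx
  have hsy := Real.sq_sqrt hy
  have hsxy : Real.sqrt (x*y) = Real.sqrt x * Real.sqrt y := Real.sqrt_mul hx y
  have hsx0 : 0 ≤ Real.sqrt x := Real.sqrt_nonneg x
  have hsy0 : 0 ≤ Real.sqrt y := Real.sqrt_nonneg y
  have hss : Real.sqrt y ≤ Real.sqrt x := Real.sqrt_le_sqrt hxy
  have hΛρ : x ≤ Λ + ρ := by rw [hxdef]; linarith
  have k := key j
  rw [hsxy] at k
  have hab' := hab j; have hb' := hb j; have hc' := hc j
  have hΛμ : Λ - μ = x - y := by rw [hxdef, hydef]; ring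
  rw [hΛμ]
  have h1 : (a j ^ 2 - b j) * (x + y) ≤ c j := by
    nlinarith [mul_nonneg hb' (sq_nonneg (Real.sqrt x - Real.sqrt y))]
  have h2 : b j * (Real.sqrt x - Real.sqrt y) ^ 2 ≤ c j := by
    nlinarith [mul_nonneg (sub_nonneg.mpr hab') (add_nonneg hx hy)]
  have h1' : (a j ^ 2 - b j) * (x - y) ^ 2 ≤ c j * (x - y) := by
    nlinarith [mul_le_mul_of_nonneg_right h1 (sub_nonneg.mpr hxy),
      mul_nonneg (mul_nonneg (sub_nonneg.mpr hab') (sub_nonneg.mpr hxy)) hy]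
  have hid : (x - y) ^ 2 = (Real.sqrt x - Real.sqrt y) ^ 2 * (Real.sqrt x + Real.sqrt y) ^ 2 := by
    linear_combination (-(x - y + Real.sqrt x ^ 2 - Real.sqrt y ^ 2)) * hsx +
      (x - y + Real.sqrt x ^ 2 - Real.sqrt y ^ 2) * hsy
  have hB : (Real.sqrt x + Real.sqrt y) ^ 2 ≤ 2 * (x + y) := by
    nlinarith [sq_nonneg (Real.sqrt x - Real.sqrt y)]
  have h2' : b j * (x - y) ^ 2 ≤ 2 * c j * (x + y) := by
    calc b j * (x - y) ^ 2
        = b j * (Real.sqrt x - Real.sqrt y) ^ 2 * (Real.sqrt x + Real.sqrt y) ^ 2 := by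
          rw [hid]; ring
      _ ≤ c j * (Real.sqrt x + Real.sqrt y) ^ 2 :=
          mul_le_mul_of_nonneg_right h2 (sq_nonneg _)
      _ ≤ c j * (2 * (x + y)) := mul_le_mul_of_nonneg_left hB hc'
      _ = 2 * c j * (x + y) := by ring
  exact stmt_1_aux _ _ _ _ _ _ hc' hxy hΛρ h1' h2' hy
end

section
/- Let n ≥ 1 and k ≥ 1 be integers and let 0 < λ₁ ≤ λ₂ ≤ ⋯ ≤ λ_{k+1} be real numbers. If Σ_{i=1}^{k} (λ_{k+1} − λ_i)² ≤ (4/n)·Σ_{i=1}^{k} (λ_{k+1} − λ_i)·λ_i, then λ_{k+1} ≤ (1/k)·(1 + 4/n)·Σ_{i=1}^{k} λ_i. -/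
/-- Yang's first inequality implies Yang's second inequality: for
`0 < λ₁ ≤ ⋯ ≤ λ_{k+1}`, if `Σ_{i=1}^{k} (λ_{k+1} − λ_i)² ≤ (4/n) Σ_{i=1}^{k} (λ_{k+1} − λ_i) λ_i`,
then `λ_{k+1} ≤ (1/k)(1 + 4/n) Σ_{i=1}^{k} λ_i`. -/
theorem stmt_3 (n k : ℕ) (hn : 1 ≤ n) (hk : 1 ≤ k) (lam : ℕ → ℝ)
    (hpos : 0 < lam 1)
    (hmono : ∀ i, 1 ≤ i → i ≤ k → lam i ≤ lam (i + 1))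
    (hyp : ∑ i ∈ Finset.Icc 1 k, (lam (k + 1) - lam i) ^ 2 ≤
      (4 / (n : ℝ)) * ∑ i ∈ Finset.Icc 1 k, (lam (k + 1) - lam i) * lam i) :
    lam (k + 1) ≤ (1 / (k : ℝ)) * (1 + 4 / (n : ℝ)) * ∑ i ∈ Finset.Icc 1 k, lam i := by
  set Λ := lam (k + 1) with hΛ
  set S := ∑ i ∈ Finset.Icc 1 k, lam i with hS
  set Q := ∑ i ∈ Finset.Icc 1 k, (lam i) ^ 2 with hQ
  have hposi : ∀ i, 1 ≤ i → i ≤ k + 1 → 0 < lam i := by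
    intro i hi1 hik
    induction i with
    | zero => omega
    | succ j ih =>
      rcases Nat.eq_or_lt_of_le hi1 with h | h
      · simpa [← h] using hpos
      · have hj1 : 1 ≤ j := by omega
        have := hmono j hj1 (by omega)
        exact lt_of_lt_of_le (ih hj1 (by omega)) this
  have hSpos : 0 < S := by
    rw [hS]
    apply Finset.sum_pos
    · intro i hi
      simp only [Finset.mem_Icc] at hi
      exact hposi i hi.1 (by omega)
    · exact ⟨1, by simp [Finset.mem_Icc, hk]⟩
  have hkpos : (0:ℝ) < k := by exact_mod_cast hk
  have hnpos : (0:ℝ) < n := by exact_mod_cast hn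
  have hcard : (Finset.Icc 1 k).card = k := by simp
  have e1 : ∑ i ∈ Finset.Icc 1 k, (Λ - lam i) ^ 2 = k * Λ ^ 2 - 2 * Λ * S + Q := by
    have : ∀ i, (Λ - lam i) ^ 2 = Λ ^ 2 - 2 * Λ * lam i + (lam i) ^ 2 := by intro i; ring
    simp_rw [this]
    rw [Finset.sum_add_distrib, Finset.sum_sub_distrib, Finset.sum_const, hcard,
      ← Finset.mul_sum]
    ring
  have e2 : ∑ i ∈ Finset.Icc 1 k, (Λ - lam i) * lam i = Λ * S - Q := by
    have : ∀ i, (Λ - lam i) * lam i = Λ * lam i - (lam i) ^ 2 := by intro i; ring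
    simp_rw [this]
    rw [Finset.sum_sub_distrib, ← Finset.mul_sum]
  rw [e1, e2] at hyp
  have cauchy : S ^ 2 ≤ k * Q := by
    have := sq_sum_le_card_mul_sum_sq (s := Finset.Icc 1 k) (f := lam)
    rw [hcard] at this
    exact_mod_cast this
  rw [div_mul_eq_mul_div, le_div_iff₀ hnpos] at hyp
  rw [show (1 / (k:ℝ)) * (1 + 4 / (n:ℝ)) * S = (((n:ℝ) + 4) * S) / (k * n) by
    field_simp, le_div_iff₀ (by positivity)]
  nlinarith [sq_nonneg (Λ * (k:ℝ) - S), mul_pos hSpos hnpos, mul_pos hkpos hnpos,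
    mul_le_mul_of_nonneg_right cauchy hnpos.le, sq_nonneg S]
end

section
/- Let n ≥ 1 and k ≥ 1 be integers and let 0 < λ₁ ≤ λ₂ ≤ ⋯ ≤ λ_k < λ_{k+1} be real numbers. If λ_{k+1} ≤ (1/k)·(1 + 4/n)·Σ_{i=1}^{k} λ_i, then Σ_{i=1}^{k} λ_i/(λ_{k+1} − λ_i) ≥ n·k/4. -/
/-- Yang's second inequality implies the Hile–Protter inequality: for
`0 < λ₁ ≤ ⋯ ≤ λ_k < λ_{k+1}`, if `λ_{k+1} ≤ (1/k)(1 + 4/n) Σ_{i=1}^{k} λ_i`,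
then `Σ_{i=1}^{k} λ_i/(λ_{k+1} − λ_i) ≥ nk/4`. -/
theorem stmt_4 (n k : ℕ) (hn : 1 ≤ n) (hk : 1 ≤ k) (lam : ℕ → ℝ)
    (hpos : 0 < lam 1)
    (hmono : ∀ i, 1 ≤ i → i ≤ k - 1 → lam i ≤ lam (i + 1))
    (hstrict : lam k < lam (k + 1))
    (hyp : lam (k + 1) ≤ (1 / (k : ℝ)) * (1 + 4 / (n : ℝ)) * ∑ i ∈ Finset.Icc 1 k, lam i) :
    ∑ i ∈ Finset.Icc 1 k, lam i / (lam (k + 1) - lam i) ≥ (n : ℝ) * k / 4 := by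
  have hkR : (0:ℝ) < k := by exact_mod_cast hk
  have hnR : (0:ℝ) < n := by exact_mod_cast hn
  -- monotonicity
  have hmono' : ∀ i j, 1 ≤ i → i ≤ j → j ≤ k → lam i ≤ lam j := by
    intro i j hi hij hjk
    induction j with
    | zero => omega
    | succ m ih =>
      rcases Nat.lt_or_ge i (m+1) with h | h
      · have h1m : 1 ≤ m := by omega
        have := hmono m h1m (by omega)
        exact le_trans (ih (by omega) (by omega)) this
      · have : i = m + 1 := by omega
        subst this; exact le_refl _
  have hposI : ∀ i ∈ Finset.Icc 1 k, 0 < lam i := by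
    intro i hi
    simp only [Finset.mem_Icc] at hi
    exact lt_of_lt_of_le hpos (hmono' 1 i le_rfl hi.1 hi.2)
  have hltI : ∀ i ∈ Finset.Icc 1 k, lam i < lam (k+1) := by
    intro i hi
    simp only [Finset.mem_Icc] at hi
    exact lt_of_le_of_lt (hmono' i k hi.1 hi.2 le_rfl) hstrict
  have hgap : ∀ i ∈ Finset.Icc 1 k, 0 < lam (k+1) - lam i := fun i hi => by
    linarith [hltI i hi]
  set s := Finset.Icc 1 k with hs
  set S := ∑ i ∈ s, lam i with hS
  set T := ∑ i ∈ s, (lam (k+1) - lam i) with hT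
  set H := ∑ i ∈ s, (lam (k+1) - lam i)⁻¹ with hH
  have hScard : s.card = k := Nat.card_Icc 1 k ▸ by omega
  have hSpos : 0 < S := Finset.sum_pos hposI ⟨1, by simp [hs]; omega⟩
  have hTpos : 0 < T := Finset.sum_pos hgap ⟨1, by simp [hs]; omega⟩
  have hHpos : 0 < H := Finset.sum_pos (fun i hi => inv_pos.2 (hgap i hi))
    ⟨1, by simp [hs]; omega⟩
  -- T ≤ (4/n) S
  have hTle : T ≤ 4 / (n:ℝ) * S := by
    have hT' : T = k * lam (k+1) - S := by
      rw [hT, Finset.sum_sub_distrib, Finset.sum_const, hScard]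
      simp [hS, nsmul_eq_mul]
    have : (k:ℝ) * lam (k+1) ≤ (1 + 4/(n:ℝ)) * S := by
      have := mul_le_mul_of_nonneg_left hyp (le_of_lt hkR)
      calc (k:ℝ) * lam (k+1) ≤ (k:ℝ) * ((1/(k:ℝ)) * (1 + 4/(n:ℝ)) * S) := this
        _ = (1 + 4/(n:ℝ)) * S := by field_simp
    rw [hT']; linarith
  -- Cauchy-Schwarz: k^2 ≤ T * H
  have hCS : (k:ℝ)^2 ≤ T * H := by
    have := Finset.sum_sq_le_sum_mul_sum_of_sq_eq_mul s
      (f := fun i => lam (k+1) - lam i) (g := fun i => (lam (k+1) - lam i)⁻¹)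
      (r := fun _ => (1:ℝ))
      (fun i hi => (hgap i hi).le) (fun i hi => (inv_pos.2 (hgap i hi)).le)
      (fun i hi => by rw [one_pow, mul_inv_cancel₀ (hgap i hi).ne'])
    have h1 : (∑ _i ∈ s, (1:ℝ)) = (k:ℝ) := by rw [Finset.sum_const, hScard]; simp
    rw [h1] at this
    exact_mod_cast this
  -- Chebyshev: S * H ≤ k * Σ λ_i / (Λ - λ_i)
  have hCheb : S * H ≤ (k:ℝ) * ∑ i ∈ s, lam i / (lam (k+1) - lam i) := by
    have hmv : MonovaryOn lam (fun i => (lam (k+1) - lam i)⁻¹) s := by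
      intro i hi j hj hlt
      simp only [hs, Finset.coe_Icc, Set.mem_Icc] at hi hj
      by_contra hcon
      push_neg at hcon
      have : lam j ≤ lam i := hmono' j i hj.1 (by
        by_contra h; push_neg at h
        exact absurd (hmono' i j hi.1 h.le hj.2) (not_le.2 hcon)) hi.2
      have hgi := hgap i (Finset.mem_Icc.2 hi)
      have hgj := hgap j (Finset.mem_Icc.2 hj)
      have : (lam (k+1) - lam j)⁻¹ ≤ (lam (k+1) - lam i)⁻¹ := by
        apply inv_anti₀ hgi; linarith
      exact absurd hlt (not_lt.2 this)
    have := hmv.sum_mul_sum_le_card_mul_sum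
    simp only [hScard] at this
    calc S * H = (∑ i ∈ s, lam i) * ∑ i ∈ s, (lam (k+1) - lam i)⁻¹ := rfl
      _ ≤ (k:ℝ) * ∑ i ∈ s, lam i * (lam (k+1) - lam i)⁻¹ := this
      _ = (k:ℝ) * ∑ i ∈ s, lam i / (lam (k+1) - lam i) := by
        simp_rw [div_eq_mul_inv]
  -- combine
  have hHge : (k:ℝ)^2 * (n:ℝ) / (4 * S) ≤ H := by
    have h4S : 0 < 4 / (n:ℝ) * S := by positivity
    have : (k:ℝ)^2 ≤ (4/(n:ℝ) * S) * H := le_trans hCS (by nlinarith)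
    rw [div_le_iff₀ (by positivity)]
    calc (k:ℝ)^2 * (n:ℝ) ≤ (4/(n:ℝ) * S) * H * n := by nlinarith
      _ = H * (4 * S) := by field_simp
  have : S * ((k:ℝ)^2 * (n:ℝ) / (4 * S)) ≤ (k:ℝ) * ∑ i ∈ s, lam i / (lam (k+1) - lam i) := by
    calc S * ((k:ℝ)^2 * (n:ℝ) / (4 * S)) ≤ S * H := by
          apply mul_le_mul_of_nonneg_left hHge hSpos.le
      _ ≤ _ := hCheb
  have heq : S * ((k:ℝ)^2 * (n:ℝ) / (4 * S)) = (k:ℝ) * ((n:ℝ) * k / 4) := by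
    field_simp
  rw [heq] at this
  have := le_of_mul_le_mul_left this hkR
  linarith
end

section
/- Let n ≥ 1 and k ≥ 1 be integers and let μ₁ ≤ μ₂ ≤ ⋯ ≤ μ_{k+1} be positive real numbers satisfying Σ_{i=1}^{k} (μ_{k+1} − μ_i)² ≤ (4/n)·Σ_{i=1}^{k} μ_i·(μ_{k+1} − μ_i). For each m, define Γ_m = (1/m)·Σ_{i=1}^{m} μ_i, E_m = (1/m)·Σ_{i=1}^{m} μ_i², and H_m = (1 + 2/n)·Γ_m² − E_m. Then H_{k+1} ≤ C(n,k)·((k+1)/k)^{4/n}·H_k, where C(n,k) = 1 − (1/(3n))·(k/(k+1))^{4/n}·(1 + 2/n)·(1 + 4/n)/(k+1)³ < 1. -/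
set_option maxHeartbeats 2000000 in
lemma cy_core (q K Λ T t : ℝ) (hq : 0 < q) (hK : 1 ≤ K)
    (hY : t^2 - (2+q)*Λ*t + (1+q)*T ≤ 0) :
    0 ≤ (1+q/2)*Λ^2 - T ∧
    (K+1)^2*((1+q/2)*(K*Λ+t)^2 - (K+1)*(K*T+t^2)) ≤
      ((K+1)^4 + q*(K+1)^3 + (q+q^2)/2*(K+1)^2 + (q/3+q^2/2+q^3/6)*(K+1)
        + (q/4+11*q^2/24+q^3/4+q^4/24) - q*(1+q)*(2+q)/24*(K+1)) * ((1+q/2)*Λ^2 - T) := by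
  have hK0 : (0:ℝ) < K := by linarith
  have hqnn : (0:ℝ) ≤ q := le_of_lt hq
  have hKnn : (0:ℝ) ≤ K := le_of_lt hK0
  obtain ⟨F, hF⟩ : ∃ F : ℝ, F = (1+q/2)*Λ^2 - T := ⟨_, rfl⟩
  obtain ⟨u, hu⟩ : ∃ u : ℝ, u = t - (1+q/2)*Λ := ⟨_, rfl⟩
  rw [← hF]
  have h1 : u^2 + (q/2)*(1+q/2)*Λ^2 ≤ (1+q)*F := by
    have hid : u^2 + (q/2)*(1+q/2)*Λ^2 - (1+q)*F = t^2 - (2+q)*Λ*t + (1+q)*T := by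
      rw [hu, hF]; ring
    linarith [hY, hid.le, hid.ge]
  have h7 : (0:ℝ) ≤ (1+q)*F := by nlinarith [h1, sq_nonneg u, sq_nonneg Λ, mul_nonneg (mul_nonneg hqnn (by linarith : (0:ℝ) ≤ 1+q/2)) (sq_nonneg Λ)]
  have hFnn : 0 ≤ F := by
    have h8 := mul_nonneg (inv_nonneg.mpr (by linarith : (0:ℝ) ≤ 1+q)) h7
    rwa [inv_mul_cancel_left₀ (by linarith : (1:ℝ)+q ≠ 0) F] at h8
  refine ⟨hFnn, ?_⟩
  obtain ⟨c1, hc1⟩ : ∃ c1 : ℝ, c1 = q/4+3*q^2/8+q^3/8 := ⟨_, rfl⟩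
  obtain ⟨c2, hc2⟩ : ∃ c2 : ℝ, c2 = q/4+11*q^2/24+q^3/4+q^4/24 := ⟨_, rfl⟩
  obtain ⟨M2, hM2⟩ : ∃ M2 : ℝ, M2 = (1+q)*(K+1)^3 + q*(1+q)/2*(K+1)^2 + c1*(K+1) + c2 := ⟨_, rfl⟩
  obtain ⟨A2, hA2⟩ : ∃ A2 : ℝ, A2 = (1+q)*(K+1)^3 + (1+q)*K*(K+1)^2 + c1*(K+1) + c2 := ⟨_, rfl⟩
  obtain ⟨A1, hA1⟩ : ∃ A1 : ℝ, A1 = -(q*(1+q)*(2+q)/2)*(K+1)^2 := ⟨_, rfl⟩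
  obtain ⟨G, hG⟩ : ∃ G : ℝ, G = (q/2-K)*u^2 + q*(1+q/2)*Λ*u + (q/2)*(1+q/2)*(1+q/2+K)*Λ^2 := ⟨_, rfl⟩
  obtain ⟨D4, hD4⟩ : ∃ D4 : ℝ, D4 = ((2:ℝ)/3)*q^3 + (29/12)*q^4 + (253/72)*q^5 + (191/72)*q^6 + (325/288)*q^7
      + (157/576)*q^8 + (5/144)*q^9 + (1/576)*q^10
    + K*((1/2)*q^2 + (8/3)*q^3 + (131/24)*q^4 + (67/12)*q^5 + (37/12)*q^6 + (89/96)*q^7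
      + (7/48)*q^8 + (1/96)*q^9)
    + K^2*(q^2 + (95/24)*q^3 + (99/16)*q^4 + (461/96)*q^5 + (121/64)*q^6 + (1/3)*q^7 + (1/64)*q^8)
    + K^3*((1/2)*q^2 + (11/6)*q^3 + (21/8)*q^4 + (11/6)*q^5 + (5/8)*q^6 + (1/12)*q^7) := ⟨_, rfl⟩
  have key : 4*A2*(M2*(u^2 + (q/2)*(1+q/2)*Λ^2) - (1+q)*(K+1)^2*G) =
      (2*A2*u + A1*Λ)^2 + D4*Λ^2 := by
    rw [hA2, hM2, hA1, hG, hD4, hc1, hc2]; ring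
  have mono : ∀ i j : ℕ, (0:ℝ) ≤ K^i*q^j := fun i j =>
    mul_nonneg (pow_nonneg hKnn i) (pow_nonneg hqnn j)
  have hD4nn : 0 ≤ D4 := by
    rw [hD4]
    linarith [mono 0 3, mono 0 4, mono 0 5, mono 0 6, mono 0 7, mono 0 8, mono 0 9, mono 0 10,
      mono 1 2, mono 1 3, mono 1 4, mono 1 5, mono 1 6, mono 1 7, mono 1 8, mono 1 9,
      mono 2 2, mono 2 3, mono 2 4, mono 2 5, mono 2 6, mono 2 7, mono 2 8,
      mono 3 2, mono 3 3, mono 3 4, mono 3 5, mono 3 6, mono 3 7]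
  have hKp : (0:ℝ) < K + 1 := by linarith
  have hc1nn : (0:ℝ) ≤ c1 := by rw [hc1]; linarith [mono 0 1, mono 0 2, mono 0 3]
  have hc2nn : (0:ℝ) ≤ c2 := by rw [hc2]; linarith [mono 0 1, mono 0 2, mono 0 3, mono 0 4]
  have hA2pos : 0 < A2 := by
    rw [hA2]
    have h1' : (0:ℝ) < (1+q)*(K+1)^3 := by positivity
    have h2' : (0:ℝ) ≤ (1+q)*K*(K+1)^2 := by positivity
    have h3' : (0:ℝ) ≤ c1*(K+1) := mul_nonneg hc1nn (le_of_lt hKp)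
    linarith
  have hM2nn : 0 ≤ M2 := by
    rw [hM2]
    have h1' : (0:ℝ) ≤ (1+q)*(K+1)^3 := by positivity
    have h2' : (0:ℝ) ≤ q*(1+q)/2*(K+1)^2 := by positivity
    have h3' : (0:ℝ) ≤ c1*(K+1) := mul_nonneg hc1nn (le_of_lt hKp)
    linarith
  have hW : 0 ≤ M2*(u^2 + (q/2)*(1+q/2)*Λ^2) - (1+q)*(K+1)^2*G := by
    nlinarith [key, sq_nonneg (2*A2*u + A1*Λ), mul_nonneg hD4nn (sq_nonneg Λ), hA2pos]
  have h5 : (1+q)*((K+1)^2*G) ≤ (1+q)*(M2*F) := by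
    have h6 := mul_le_mul_of_nonneg_left h1 hM2nn
    nlinarith [hW, h6]
  have hGb : (K+1)^2*G ≤ M2*F := le_of_mul_le_mul_left h5 (by linarith)
  have idL : (K+1)^2*((1+q/2)*(K*Λ+t)^2 - (K+1)*(K*T+t^2)) = K*(K+1)^3*F + (K+1)^2*G := by
    rw [hG, hu, hF]; ring
  have idR : (K+1)^4 + q*(K+1)^3 + (q+q^2)/2*(K+1)^2 + (q/3+q^2/2+q^3/6)*(K+1)
        + (q/4+11*q^2/24+q^3/4+q^4/24) - q*(1+q)*(2+q)/24*(K+1) = K*(K+1)^3 + M2 := by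
    rw [hM2, hc1, hc2]; ring
  rw [idL, idR]
  have h9 : 0 ≤ K*(K+1)^3*F - K*(K+1)^3*F := by linarith
  nlinarith [hGb]

set_option maxHeartbeats 4000000 in
lemma cy_beta (q K : ℝ) (hq : 0 < q) (hK : 1 ≤ K) :
    (K+1)^4 + q*(K+1)^3 + (q+q^2)/2*(K+1)^2 + (q/3+q^2/2+q^3/6)*(K+1)
      + (q/4+11*q^2/24+q^3/4+q^4/24) ≤ (K+1)^4 * ((K+1)/K) ^ q := by
  have hK0 : (0:ℝ) < K := by linarith
  have hKp : (0:ℝ) < K + 1 := by linarith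
  obtain ⟨x, hx⟩ : ∃ x : ℝ, x = 1/(K+1) := ⟨_, rfl⟩
  have hx0 : 0 < x := by rw [hx]; positivity
  have hxh : x ≤ 1/2 := by
    rw [hx, div_le_div_iff₀ hKp (by norm_num)]; linarith
  have hxlt : |x| < 1 := by rw [abs_of_pos hx0]; linarith
  have habs := Real.abs_log_sub_add_sum_range_le hxlt 8
  simp only [Finset.sum_range_succ, Finset.sum_range_zero] at habs
  rw [abs_of_pos hx0] at habs
  norm_num at habs
  have h2 := (abs_le.mp habs).2
  have h1x : (0:ℝ) < 1 - x := by linarith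
  have hb : x^9/(1-x) ≤ 2*x^9 := by
    rw [div_le_iff₀ h1x]
    nlinarith [pow_nonneg hx0.le 9]
  have hx4 : x^4 ≤ 1/16 := by
    have h := pow_le_pow_left₀ hx0.le hxh 4
    norm_num at h
    exact h
  have hlog : Real.log ((K+1)/K) = -Real.log (1-x) := by
    rw [show (1:ℝ)-x = K/(K+1) by rw [hx]; field_simp; ring, ← Real.log_inv]
    congr 1
    field_simp
  have hL4 : x + x^2/2 + x^3/3 + x^4/4 ≤ Real.log ((K+1)/K) := by
    rw [hlog]
    nlinarith [h2, hb, hx4, pow_nonneg hx0.le 5, pow_nonneg hx0.le 6, pow_nonneg hx0.le 7,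
      pow_nonneg hx0.le 8]
  obtain ⟨y, hy⟩ : ∃ y : ℝ, y = q*(x + x^2/2 + x^3/3 + x^4/4) := ⟨_, rfl⟩
  have hynn : 0 ≤ y := by
    rw [hy]
    have : (0:ℝ) ≤ x + x^2/2 + x^3/3 + x^4/4 := by positivity
    positivity
  have hE5 : 1 + y + y^2/2 + y^3/6 + y^4/24 ≤ Real.exp y := by
    have h := Real.sum_le_exp_of_nonneg hynn 5
    simp only [Finset.sum_range_succ, Finset.sum_range_zero, Nat.factorial] at h
    norm_num at h
    linarith
  have hexp : Real.exp y ≤ ((K+1)/K) ^ q := by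
    rw [Real.rpow_def_of_pos (div_pos hKp hK0)]
    apply Real.exp_le_exp.mpr
    rw [hy, mul_comm (Real.log ((K+1)/K)) q]
    exact mul_le_mul_of_nonneg_left hL4 hq.le
  have hnum : (K+1)^4 + q*(K+1)^3 + (q+q^2)/2*(K+1)^2 + (q/3+q^2/2+q^3/6)*(K+1)
      + (q/4+11*q^2/24+q^3/4+q^4/24) ≤ (K+1)^4 * (1 + y + y^2/2 + y^3/6 + y^4/24) := by
    rw [← sub_nonneg]
    have hid : (K+1)^4 * (1 + y + y^2/2 + y^3/6 + y^4/24)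
        - ((K+1)^4 + q*(K+1)^3 + (q+q^2)/2*(K+1)^2 + (q/3+q^2/2+q^3/6)*(K+1)
          + (q/4+11*q^2/24+q^3/4+q^4/24)) =
        (((5:ℝ)/12*q^2 + 7/24*q^3 + 1/12*q^4)*(K+1)^11
        + (13/72*q^2 + 5/16*q^3 + 17/144*q^4)*(K+1)^10
        + (1/12*q^2 + 2/9*q^3 + 7/48*q^4)*(K+1)^9
        + (1/32*q^2 + 41/288*q^3 + 155/1152*q^4)*(K+1)^8
        + (205/2592*q^3 + 31/288*q^4)*(K+1)^7
        + (17/576*q^3 + 49/648*q^4)*(K+1)^6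
        + (1/96*q^3 + 223/5184*q^4)*(K+1)^5
        + (1/384*q^3 + 1355/62208*q^4)*(K+1)^4
        + (97/10368*q^4)*(K+1)^3 + (7/2304*q^4)*(K+1)^2 + (1/1152*q^4)*(K+1)
        + (1/6144*q^4)) / (K+1)^12 := by
      rw [hy, hx]
      field_simp
      ring
    rw [hid]
    have mono : ∀ i j : ℕ, (0:ℝ) ≤ (K+1)^i*q^j := fun i j =>
      mul_nonneg (pow_nonneg hKp.le i) (pow_nonneg hq.le j)
    apply div_nonneg _ (pow_nonneg hKp.le 12)
    nlinarith [mono 11 2, mono 11 3, mono 11 4, mono 10 2, mono 10 3, mono 10 4,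
      mono 9 2, mono 9 3, mono 9 4, mono 8 2, mono 8 3, mono 8 4,
      mono 7 3, mono 7 4, mono 6 3, mono 6 4, mono 5 3, mono 5 4, mono 4 3, mono 4 4,
      mono 3 4, mono 2 4, mono 1 4, mono 0 4]
  calc (K+1)^4 + q*(K+1)^3 + (q+q^2)/2*(K+1)^2 + (q/3+q^2/2+q^3/6)*(K+1)
      + (q/4+11*q^2/24+q^3/4+q^4/24)
      ≤ (K+1)^4 * (1 + y + y^2/2 + y^3/6 + y^4/24) := hnum
    _ ≤ (K+1)^4 * ((K+1)/K) ^ q := by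
        apply mul_le_mul_of_nonneg_left (hE5.trans hexp) (pow_nonneg hKp.le 4)




set_option maxHeartbeats 2000000 in
/-- Cheng–Yang recursion formula (equation (5.24)): for positive
`μ₁ ≤ ⋯ ≤ μ_{k+1}` satisfying Yang's first inequality, setting
`Γ_m = (1/m) Σ_{i=1}^m μ_i`, `E_m = (1/m) Σ_{i=1}^m μ_i²`, and
`H_m = (1 + 2/n) Γ_m² − E_m`, we have
`H_{k+1} ≤ C(n,k) ((k+1)/k)^{4/n} H_k` with
`C(n,k) = 1 − (1/(3n)) (k/(k+1))^{4/n} (1 + 2/n)(1 + 4/n)/(k+1)³ < 1`. -/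
theorem stmt_6 (n k : ℕ) (hn : 1 ≤ n) (hk : 1 ≤ k) (μ : ℕ → ℝ)
    (hpos : ∀ i, 1 ≤ i → i ≤ k + 1 → 0 < μ i)
    (hmono : ∀ i, 1 ≤ i → i ≤ k → μ i ≤ μ (i + 1))
    (hyp : ∑ i ∈ Finset.Icc 1 k, (μ (k + 1) - μ i) ^ 2 ≤
      (4 / (n : ℝ)) * ∑ i ∈ Finset.Icc 1 k, μ i * (μ (k + 1) - μ i)) :
    (fun m : ℕ => (1 + 2 / (n : ℝ)) * ((1 / (m : ℝ)) * ∑ i ∈ Finset.Icc 1 m, μ i) ^ 2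
        - (1 / (m : ℝ)) * ∑ i ∈ Finset.Icc 1 m, (μ i) ^ 2) (k + 1) ≤
      (1 - (1 / (3 * (n : ℝ))) * (((k : ℝ) / ((k : ℝ) + 1)) ^ ((4 : ℝ) / n)) *
          ((1 + 2 / (n : ℝ)) * (1 + 4 / (n : ℝ)) / ((k : ℝ) + 1) ^ 3)) *
        (((k : ℝ) + 1) / (k : ℝ)) ^ ((4 : ℝ) / n) *
        (fun m : ℕ => (1 + 2 / (n : ℝ)) * ((1 / (m : ℝ)) * ∑ i ∈ Finset.Icc 1 m, μ i) ^ 2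
          - (1 / (m : ℝ)) * ∑ i ∈ Finset.Icc 1 m, (μ i) ^ 2) k ∧
    (1 - (1 / (3 * (n : ℝ))) * (((k : ℝ) / ((k : ℝ) + 1)) ^ ((4 : ℝ) / n)) *
        ((1 + 2 / (n : ℝ)) * (1 + 4 / (n : ℝ)) / ((k : ℝ) + 1) ^ 3)) < 1 := by
  have hn1 : (1:ℝ) ≤ (n:ℝ) := by exact_mod_cast hn
  have hk1 : (1:ℝ) ≤ (k:ℝ) := by exact_mod_cast hk
  have hn0 : (0:ℝ) < (n:ℝ) := by linarith
  have hk0 : (0:ℝ) < (k:ℝ) := by linarith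
  have hKp : (0:ℝ) < (k:ℝ) + 1 := by linarith
  have hq : (0:ℝ) < 4/(n:ℝ) := by positivity
  have hγ : (0:ℝ) < ((k:ℝ)/((k:ℝ)+1)) ^ ((4:ℝ)/n) :=
    Real.rpow_pos_of_pos (div_pos hk0 hKp) _
  constructor
  · -- main inequality
    simp only
    have hcard : (Finset.Icc 1 k).card = k := by rw [Nat.card_Icc]; omega
    have hs1 : ∑ i ∈ Finset.Icc 1 (k+1), μ i = (∑ i ∈ Finset.Icc 1 k, μ i) + μ (k+1) :=
      Finset.sum_Icc_succ_top (by omega) μ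
    have hs2 : ∑ i ∈ Finset.Icc 1 (k+1), (μ i)^2
        = (∑ i ∈ Finset.Icc 1 k, (μ i)^2) + (μ (k+1))^2 :=
      Finset.sum_Icc_succ_top (by omega) _
    rw [hs1, hs2]
    push_cast
    obtain ⟨P, hPd⟩ : ∃ P : ℝ, P = ∑ i ∈ Finset.Icc 1 k, μ i := ⟨_, rfl⟩
    obtain ⟨S, hSd⟩ : ∃ S : ℝ, S = ∑ i ∈ Finset.Icc 1 k, (μ i)^2 := ⟨_, rfl⟩
    rw [← hPd, ← hSd]
    -- expand hyp
    have e1 : ∑ i ∈ Finset.Icc 1 k, (μ (k+1) - μ i)^2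
        = (k:ℝ)*(μ (k+1))^2 - 2*(μ (k+1))*P + S := by
      rw [hPd, hSd]
      rw [Finset.sum_congr rfl (fun i _ => sub_sq (μ (k+1)) (μ i)),
        Finset.sum_add_distrib, Finset.sum_sub_distrib, ← Finset.mul_sum,
        Finset.sum_const, hcard]
      push_cast [nsmul_eq_mul]
      ring
    have e2 : ∑ i ∈ Finset.Icc 1 k, μ i * (μ (k+1) - μ i)
        = (μ (k+1))*P - S := by
      rw [hPd, hSd]
      rw [Finset.sum_congr rfl
        (fun i _ => (by ring : μ i * (μ (k+1) - μ i) = μ (k+1) * μ i - (μ i)^2)),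
        Finset.sum_sub_distrib, ← Finset.mul_sum]
      all_goals ring
    rw [e1, e2] at hyp
    obtain ⟨Λ, hΛd⟩ : ∃ Λ : ℝ, Λ = P/(k:ℝ) := ⟨_, rfl⟩
    obtain ⟨T, hTd⟩ : ∃ T : ℝ, T = S/(k:ℝ) := ⟨_, rfl⟩
    have hPL : (k:ℝ)*Λ = P := by rw [hΛd]; field_simp
    have hTS : (k:ℝ)*T = S := by rw [hTd]; field_simp
    have hY : (μ (k+1))^2 - (2+4/(n:ℝ))*Λ*(μ (k+1)) + (1+4/(n:ℝ))*T ≤ 0 := by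
      have hexp : (k:ℝ)*((μ (k+1))^2 - (2+4/(n:ℝ))*Λ*(μ (k+1)) + (1+4/(n:ℝ))*T)
          = (k:ℝ)*(μ (k+1))^2 - (2+4/(n:ℝ))*(μ (k+1))*P + (1+4/(n:ℝ))*S := by
        rw [← hPL, ← hTS]; ring
      nlinarith [hyp, hexp.le, hexp.ge, hk0]
    obtain ⟨hFnn, hcore⟩ := cy_core (4/(n:ℝ)) (k:ℝ) Λ T (μ (k+1)) hq hk1 hY
    have hβ4 := cy_beta (4/(n:ℝ)) (k:ℝ) hq hk1
    -- combine
    have hcomb : ((k:ℝ)+1)^2*((1+(4/(n:ℝ))/2)*((k:ℝ)*Λ+μ (k+1))^2 - ((k:ℝ)+1)*((k:ℝ)*T+(μ (k+1))^2))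
        ≤ (((k:ℝ)+1)^4 * (((k:ℝ)+1)/(k:ℝ)) ^ ((4:ℝ)/n)
            - (4/(n:ℝ))*(1+4/(n:ℝ))*(2+4/(n:ℝ))/24*((k:ℝ)+1)) * ((1+(4/(n:ℝ))/2)*Λ^2 - T) := by
      have hmul := mul_nonneg (sub_nonneg.mpr hβ4) hFnn
      nlinarith [hcore, hmul]
    -- rewrite RHS of goal
    have hγβ : ((k:ℝ)/((k:ℝ)+1)) ^ ((4:ℝ)/n) * (((k:ℝ)+1)/(k:ℝ)) ^ ((4:ℝ)/n) = 1 := by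
      rw [← Real.mul_rpow (by positivity) (by positivity),
        show (k:ℝ)/((k:ℝ)+1)*(((k:ℝ)+1)/(k:ℝ)) = 1 by field_simp]
      exact Real.one_rpow _
    have hRHSeq : (1 - (1/(3*(n:ℝ))) * (((k:ℝ)/((k:ℝ)+1)) ^ ((4:ℝ)/n)) *
          ((1+2/(n:ℝ))*(1+4/(n:ℝ))/((k:ℝ)+1)^3)) * ((((k:ℝ)+1)/(k:ℝ)) ^ ((4:ℝ)/n))
        = (((k:ℝ)+1)/(k:ℝ)) ^ ((4:ℝ)/n)
          - (1/(3*(n:ℝ))) * ((1+2/(n:ℝ))*(1+4/(n:ℝ))/((k:ℝ)+1)^3) := by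
      have expand : (1 - (1/(3*(n:ℝ))) * (((k:ℝ)/((k:ℝ)+1)) ^ ((4:ℝ)/n)) *
            ((1+2/(n:ℝ))*(1+4/(n:ℝ))/((k:ℝ)+1)^3)) * ((((k:ℝ)+1)/(k:ℝ)) ^ ((4:ℝ)/n))
          = (((k:ℝ)+1)/(k:ℝ)) ^ ((4:ℝ)/n)
            - (1/(3*(n:ℝ))) * ((1+2/(n:ℝ))*(1+4/(n:ℝ))/((k:ℝ)+1)^3) *
              (((k:ℝ)/((k:ℝ)+1)) ^ ((4:ℝ)/n) * ((((k:ℝ)+1)/(k:ℝ)) ^ ((4:ℝ)/n))) := by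
        ring
      rw [expand, hγβ, mul_one]
    rw [hRHSeq]
    -- convert goal to cleared form
    have hHkF : (1+2/(n:ℝ))*(1/(k:ℝ)*P)^2 - 1/(k:ℝ)*S = (1+(4/(n:ℝ))/2)*Λ^2 - T := by
      rw [hΛd, hTd]; field_simp; ring
    rw [hHkF]
    have hLHS : (1+2/(n:ℝ))*(1/((k:ℝ)+1)*(P+μ (k+1)))^2 - 1/((k:ℝ)+1)*(S+(μ (k+1))^2)
        = ((1+(4/(n:ℝ))/2)*((k:ℝ)*Λ+μ (k+1))^2 - ((k:ℝ)+1)*((k:ℝ)*T+(μ (k+1))^2))/((k:ℝ)+1)^2 := by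
      rw [← hPL, ← hTS]; field_simp; ring
    rw [hLHS, div_le_iff₀ (pow_pos hKp 2)]
    have hfinid : (((k:ℝ)+1)^4 * (((k:ℝ)+1)/(k:ℝ)) ^ ((4:ℝ)/n)
            - (4/(n:ℝ))*(1+4/(n:ℝ))*(2+4/(n:ℝ))/24*((k:ℝ)+1)) * ((1+(4/(n:ℝ))/2)*Λ^2 - T)
        = ((k:ℝ)+1)^2 * (((((k:ℝ)+1)/(k:ℝ)) ^ ((4:ℝ)/n)
            - (1/(3*(n:ℝ))) * ((1+2/(n:ℝ))*(1+4/(n:ℝ))/((k:ℝ)+1)^3))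
            * ((1+(4/(n:ℝ))/2)*Λ^2 - T) * ((k:ℝ)+1)^2) := by
      field_simp
      ring
    rw [hfinid] at hcomb
    exact le_of_mul_le_mul_left hcomb (pow_pos hKp 2)
  · -- C < 1
    have h1 : (0:ℝ) < 1/(3*(n:ℝ)) := by positivity
    have h2 : (0:ℝ) < (1+2/(n:ℝ))*(1+4/(n:ℝ))/((k:ℝ)+1)^3 := by positivity
    nlinarith [mul_pos (mul_pos h1 hγ) h2]
end

section
/- Fix an integer n ≥ 1 and a real number d > 0. Let (λ_k)_{k≥1} be the nondecreasing enumeration, counted with multiplicity, of the family of real numbers π²·(k₁² + ⋯ + k_n²)/d² indexed by n-tuples (k₁, …, k_n) of positive integers; that is, λ_k is the k-th smallest member of this family counted with multiplicity. Then for every integer k with 1 ≤ k ≤ 100, one has λ_{k+1} − λ_k ≤ (3π²/d²)·k^{1/n}. -/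
/-- The nondecreasing enumeration, counted with multiplicity, of a countable family
of reals: `enum f k = inf {t : the number of indices i with f i ≤ t is at least k}`. -/
noncomputable def enumFamily {ι : Type*} (f : ι → ℝ) (k : ℕ) : ℝ :=
  sInf {t : ℝ | (k : ℕ∞) ≤ {i : ι | f i ≤ t}.encard}

namespace Stmt7Aux

variable {n : ℕ}

/-- Sum of squares of a tuple of positive integers. -/
def gsum (κ : Fin n → ℕ+) : ℕ := ∑ i, (κ i : ℕ) ^ 2

/-- Tuples with sum of squares at most `m`. -/
def A (n m : ℕ) : Set (Fin n → ℕ+) := {κ | gsum κ ≤ m}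

lemma finite_A (m : ℕ) : (A n m).Finite := by
  apply Set.Finite.subset
    (Set.finite_Icc (1 : Fin n → ℕ+) (fun _ => ⟨m + 1, Nat.succ_pos m⟩))
  intro κ hκ
  refine ⟨fun i => (κ i).one_le, fun i => ?_⟩
  have h1 : (κ i : ℕ) ≤ (κ i : ℕ) ^ 2 := Nat.le_self_pow two_ne_zero _
  have h2 : (κ i : ℕ) ^ 2 ≤ gsum κ :=
    Finset.single_le_sum (f := fun i => (κ i : ℕ) ^ 2) (fun _ _ => Nat.zero_le _)
      (Finset.mem_univ i)
  have h3 : (κ i : ℕ) ≤ m + 1 := by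
    have := le_trans h1 (le_trans h2 hκ); omega
  exact_mod_cast h3

/-- Counting function. -/
noncomputable def N (n m : ℕ) : ℕ := (A n m).ncard

lemma A_mono {m m' : ℕ} (h : m ≤ m') : A n m ⊆ A n m' := fun _ hκ => le_trans hκ h

lemma card_Icc_pnat (a : ℕ+) :
    (Set.Icc (1 : Fin n → ℕ+) (fun _ => a)).ncard = (a : ℕ) ^ n := by
  rw [← Finset.coe_Icc, Set.ncard_coe_finset, Pi.card_Icc]
  simp [PNat.card_Icc]

lemma exists_N (hn : 1 ≤ n) (j : ℕ) : ∃ m, j ≤ N n m := by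
  rcases Nat.eq_zero_or_pos j with rfl | hj
  · exact ⟨0, Nat.zero_le _⟩
  refine ⟨n * j ^ 2, ?_⟩
  have hsub : Set.Icc (1 : Fin n → ℕ+) (fun _ => (⟨j, hj⟩ : ℕ+)) ⊆ A n (n * j ^ 2) := by
    intro κ hκ
    have hle : gsum κ ≤ ∑ _i : Fin n, j ^ 2 := by
      apply Finset.sum_le_sum
      intro i _
      have h := hκ.2 i
      have hle : (κ i : ℕ) ≤ j := by exact_mod_cast h
      exact Nat.pow_le_pow_left hle 2
    show gsum κ ≤ n * j ^ 2
    simpa [Finset.sum_const, Finset.card_univ, mul_comm] using hle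
  calc j ≤ j ^ n := Nat.le_self_pow (by omega) j
    _ = (Set.Icc (1 : Fin n → ℕ+) (fun _ => (⟨j, hj⟩ : ℕ+))).ncard := by
        exact (card_Icc_pnat (⟨j, hj⟩ : ℕ+)).symm
    _ ≤ N n (n * j ^ 2) := Set.ncard_le_ncard hsub (finite_A _)

lemma set_eq {c : ℝ} (hc : 0 < c) {t : ℝ} (ht : 0 ≤ t) :
    {κ : Fin n → ℕ+ | c * (gsum κ : ℝ) ≤ t} = A n ⌊t / c⌋₊ := by
  ext κ
  simp only [Set.mem_setOf_eq, A]
  rw [Nat.le_floor_iff (by positivity), le_div_iff₀ hc, mul_comm]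

lemma encard_A (m : ℕ) : (A n m).encard = (N n m : ℕ∞) :=
  ((finite_A m).cast_ncard_eq).symm

lemma nonneg_mem {c : ℝ} (hc : 0 < c) {j : ℕ} (hj : 1 ≤ j) {t : ℝ}
    (ht : (j : ℕ∞) ≤ {κ : Fin n → ℕ+ | c * (gsum κ : ℝ) ≤ t}.encard) : 0 ≤ t := by
  have hne : {κ : Fin n → ℕ+ | c * (gsum κ : ℝ) ≤ t}.Nonempty := by
    rw [← Set.one_le_encard_iff_nonempty]
    refine le_trans ?_ ht
    exact_mod_cast hj
  obtain ⟨κ, hκ⟩ := hne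
  have hκ' : c * (gsum κ : ℝ) ≤ t := hκ
  have h0 : (0 : ℝ) ≤ c * (gsum κ : ℝ) := by positivity
  linarith

lemma mem_enum_set {c : ℝ} (hc : 0 < c) {j m : ℕ} (hm : j ≤ N n m) :
    (j : ℕ∞) ≤ {κ : Fin n → ℕ+ | c * (gsum κ : ℝ) ≤ c * (m : ℝ)}.encard := by
  have hset : {κ : Fin n → ℕ+ | c * (gsum κ : ℝ) ≤ c * (m : ℝ)} = A n m := by
    ext κ
    simp only [Set.mem_setOf_eq, A, mul_le_mul_iff_right₀ hc, Nat.cast_le]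
  rw [hset, encard_A]
  exact_mod_cast hm

lemma enum_le {c : ℝ} (hc : 0 < c) {j m : ℕ} (hj : 1 ≤ j) (hm : j ≤ N n m) :
    enumFamily (fun κ : Fin n → ℕ+ => c * (gsum κ : ℝ)) j ≤ c * m := by
  apply csInf_le
  · exact ⟨0, fun t ht => nonneg_mem hc hj ht⟩
  · exact mem_enum_set hc hm

lemma le_enum (hn : 1 ≤ n) {c : ℝ} (hc : 0 < c) {j m : ℕ} (hj : 1 ≤ j)
    (hmin : ∀ m', j ≤ N n m' → m ≤ m') :
    c * m ≤ enumFamily (fun κ : Fin n → ℕ+ => c * (gsum κ : ℝ)) j := by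
  apply le_csInf
  · obtain ⟨M, hM⟩ := exists_N hn j
    exact ⟨c * M, mem_enum_set hc hM⟩
  · intro t ht
    simp only [Set.mem_setOf_eq] at ht
    have ht0 : 0 ≤ t := nonneg_mem hc hj ht
    rw [set_eq hc ht0, encard_A] at ht
    have hN : j ≤ N n ⌊t / c⌋₊ := by exact_mod_cast ht
    have hm : (m : ℝ) ≤ (⌊t / c⌋₊ : ℝ) := by exact_mod_cast hmin _ hN
    calc c * m ≤ c * ⌊t / c⌋₊ := by nlinarith
      _ ≤ c * (t / c) := by
          have := Nat.floor_le (by positivity : (0:ℝ) ≤ t / c)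
          nlinarith
      _ = t := by field_simp

/-- The combinatorial core: from a tuple achieving the minimal level `m` with
`N n m ≥ k`, incrementing its minimal coordinate `a` gives the bound. -/
lemma core (hn : 1 ≤ n) {k m : ℕ} (hk : 1 ≤ k) (hm : k ≤ N n m)
    (hmin : ∀ m' < m, N n m' < k) :
    ∃ a : ℕ+, (a : ℕ) ^ n ≤ k ∧ k + 1 ≤ N n (m + 2 * a + 1) := by
  have hm1 : 1 ≤ m := by
    have hne : (A n m).Nonempty :=
      (Set.ncard_pos (finite_A m)).mp (lt_of_lt_of_le hk hm)
    obtain ⟨κ, hκ⟩ := hne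
    have hκ' : gsum κ ≤ m := hκ
    have h1 : 1 ≤ gsum κ := by
      have i : Fin n := ⟨0, hn⟩
      have : (1:ℕ)^2 ≤ gsum κ :=
        le_trans (Nat.pow_le_pow_left (κ i).one_le 2)
          (Finset.single_le_sum (f := fun i => (κ i : ℕ) ^ 2)
            (fun _ _ => Nat.zero_le _) (Finset.mem_univ i))
      simpa using this
    omega
  have hlt : N n (m - 1) < k := hmin (m - 1) (by omega)
  have hssub : A n (m - 1) ⊂ A n m := by
    refine ⟨A_mono (by omega), fun h => ?_⟩
    have hle : N n m ≤ N n (m - 1) := Set.ncard_le_ncard h (finite_A (m - 1))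
    omega
  obtain ⟨κ, hκm, hκm1⟩ := Set.exists_of_ssubset hssub
  have hκm' : gsum κ ≤ m := hκm
  have hκm1' : ¬ gsum κ ≤ m - 1 := hκm1
  have hκeq : gsum κ = m := by omega
  obtain ⟨i₀, -, hi₀⟩ := Finset.exists_min_image Finset.univ κ
    ⟨⟨0, hn⟩, Finset.mem_univ _⟩
  set a : ℕ+ := κ i₀ with ha
  refine ⟨a, ?_, ?_⟩
  · -- `a ^ n ≤ k`
    have hsub : Set.Icc (1 : Fin n → ℕ+) (fun _ => a) \ {κ} ⊆ A n (m - 1) := by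
      rintro τ ⟨hτIcc, hτne⟩
      have hτκ : ∀ i, τ i ≤ κ i := fun i =>
        le_trans (hτIcc.2 i) (hi₀ i (Finset.mem_univ i))
      have hne : τ ≠ κ := by simpa using hτne
      obtain ⟨j, hj⟩ := Function.ne_iff.mp hne
      have hjlt : τ j < κ j := lt_of_le_of_ne (hτκ j) hj
      have hlt2 : gsum τ < gsum κ := by
        apply Finset.sum_lt_sum
        · intro i _
          exact Nat.pow_le_pow_left (by exact_mod_cast hτκ i) 2
        · exact ⟨j, Finset.mem_univ j,
            Nat.pow_lt_pow_left (by exact_mod_cast hjlt) two_ne_zero⟩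
      show gsum τ ≤ m - 1
      omega
    have hcard : (a : ℕ) ^ n ≤
        (Set.Icc (1 : Fin n → ℕ+) (fun _ => a) \ {κ}).ncard + 1 := by
      have h1 := Set.ncard_le_ncard_diff_add_ncard
        (Set.Icc (1 : Fin n → ℕ+) (fun _ => a)) {κ} (Set.finite_singleton κ)
      rw [card_Icc_pnat] at h1
      simpa using h1
    have h2 : (Set.Icc (1 : Fin n → ℕ+) (fun _ => a) \ {κ}).ncard ≤ N n (m - 1) :=
      Set.ncard_le_ncard hsub (finite_A _)
    omega
  · -- `k + 1 ≤ N n (m + 2a + 1)`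
    set κ' : Fin n → ℕ+ := Function.update κ i₀ (a + 1) with hκ'
    have hg' : gsum κ' = m + 2 * a + 1 := by
      have e0 : ∀ j, ((κ' j : ℕ)) ^ 2 =
          Function.update (fun i => (κ i : ℕ) ^ 2) i₀ (((a:ℕ)+1) ^ 2) j := by
        intro j
        rcases eq_or_ne j i₀ with rfl | hj
        · simp [hκ']
        · simp [hκ', Function.update_of_ne hj]
      have e1 : gsum κ' = ((a : ℕ) + 1) ^ 2 + ∑ x ∈ Finset.univ \ {i₀}, (κ x : ℕ) ^ 2 := by
        calc gsum κ'
            = ∑ j, Function.update (fun i => (κ i : ℕ) ^ 2) i₀ (((a:ℕ)+1) ^ 2) j :=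
              Finset.sum_congr rfl (fun j _ => e0 j)
          _ = _ := Finset.sum_update_of_mem (Finset.mem_univ i₀) _ _
      have e2 : gsum κ = (a : ℕ) ^ 2 + ∑ x ∈ Finset.univ \ {i₀}, (κ x : ℕ) ^ 2 := by
        rw [Finset.sdiff_singleton_eq_erase]
        exact (Finset.add_sum_erase _ _ (Finset.mem_univ i₀)).symm
      have e3 : ((a:ℕ)+1) ^ 2 = (a:ℕ)^2 + 2*(a:ℕ) + 1 := by ring
      omega
    have hnotmem : κ' ∉ A n m := by
      have : ¬ gsum κ' ≤ m := by omega
      exact this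
    have hsub2 : insert κ' (A n m) ⊆ A n (m + 2 * a + 1) := by
      rintro τ (rfl | hτ)
      · show gsum κ' ≤ m + 2 * a + 1; omega
      · exact A_mono (by omega) hτ
    calc k + 1 ≤ N n m + 1 := by omega
      _ = (insert κ' (A n m)).ncard :=
          (Set.ncard_insert_of_notMem hnotmem (finite_A m)).symm
      _ ≤ N n (m + 2 * a + 1) := Set.ncard_le_ncard hsub2 (finite_A _)

end Stmt7Aux

/-- Section 7, cube case: the Dirichlet eigenvalues of the cube `(0,d)ⁿ` are
`π²(k₁² + ⋯ + k_n²)/d²` over `n`-tuples of positive integers; for `1 ≤ k ≤ 100`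
the consecutive gap satisfies `λ_{k+1} − λ_k ≤ (3π²/d²) k^{1/n}`. -/
theorem stmt_7 (n : ℕ) (hn : 1 ≤ n) (d : ℝ) (hd : 0 < d)
    (lam : ℕ → ℝ)
    (hlam : ∀ k, lam k =
      enumFamily (fun κ : Fin n → ℕ+ =>
        Real.pi ^ 2 * (∑ i, ((κ i : ℕ) : ℝ) ^ 2) / d ^ 2) k) :
    ∀ k : ℕ, 1 ≤ k → k ≤ 100 →
      lam (k + 1) - lam k ≤ (3 * Real.pi ^ 2 / d ^ 2) * (k : ℝ) ^ ((1 : ℝ) / n) := by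
  intro k hk1 _
  have hπ := Real.pi_pos
  set c : ℝ := Real.pi ^ 2 / d ^ 2 with hc
  have hcpos : 0 < c := by positivity
  have hfun : (fun κ : Fin n → ℕ+ => Real.pi ^ 2 * (∑ i, ((κ i : ℕ) : ℝ) ^ 2) / d ^ 2)
      = fun κ : Fin n → ℕ+ => c * (Stmt7Aux.gsum κ : ℝ) := by
    funext κ
    rw [hc, Stmt7Aux.gsum]
    push_cast
    ring
  have hlam' : ∀ j, lam j =
      enumFamily (fun κ : Fin n → ℕ+ => c * (Stmt7Aux.gsum κ : ℝ)) j := by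
    intro j; rw [hlam j, hfun]
  have hex : ∃ m, k ≤ Stmt7Aux.N n m := Stmt7Aux.exists_N hn k
  set m : ℕ := Nat.find hex with hmdef
  have hmspec : k ≤ Stmt7Aux.N n m := Nat.find_spec hex
  have hmin : ∀ m' < m, Stmt7Aux.N n m' < k := by
    intro m' hm'
    have := Nat.find_min hex hm'
    omega
  obtain ⟨a, han, hN'⟩ := Stmt7Aux.core hn hk1 hmspec hmin
  have h1 : c * m ≤ lam k := by
    rw [hlam' k]
    apply Stmt7Aux.le_enum hn hcpos hk1
    intro m' hm'
    by_contra hcon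
    push_neg at hcon
    have := hmin m' hcon
    omega
  have h2 : lam (k+1) ≤ c * ((m + 2 * (a:ℕ) + 1 : ℕ) : ℝ) := by
    rw [hlam' (k+1)]
    exact Stmt7Aux.enum_le hcpos (by omega) hN'
  have hareal : ((a:ℕ) : ℝ) ≤ (k : ℝ) ^ ((1:ℝ)/n) := by
    have h0 : ((a:ℕ) : ℝ) ^ (n : ℕ) ≤ (k : ℝ) := by exact_mod_cast han
    have hn0 : (n : ℝ) ≠ 0 := Nat.cast_ne_zero.mpr (by omega)
    have heq : ((a:ℕ) : ℝ) = (((a:ℕ) : ℝ) ^ (n : ℕ)) ^ ((1:ℝ)/n) := by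
      rw [← Real.rpow_natCast ((a:ℕ) : ℝ) n, ← Real.rpow_mul (by positivity),
        mul_one_div, div_self hn0, Real.rpow_one]
    rw [heq]
    exact Real.rpow_le_rpow (by positivity) h0 (by positivity)
  have ha1 : (1:ℝ) ≤ ((a:ℕ) : ℝ) := by exact_mod_cast a.one_le
  have hfinal : lam (k+1) - lam k ≤ c * (2 * ((a:ℕ):ℝ) + 1) := by
    have hcast : (((m + 2 * (a:ℕ) + 1 : ℕ)) : ℝ) = (m:ℝ) + 2*((a:ℕ):ℝ) + 1 := by
      push_cast; ring
    rw [hcast] at h2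
    nlinarith
  calc lam (k+1) - lam k ≤ c * (2 * ((a:ℕ):ℝ) + 1) := hfinal
    _ ≤ c * (3 * ((a:ℕ):ℝ)) := by nlinarith
    _ ≤ c * (3 * (k:ℝ) ^ ((1:ℝ)/n)) := by nlinarith
    _ = (3 * Real.pi ^ 2 / d ^ 2) * (k : ℝ) ^ ((1 : ℝ) / n) := by rw [hc]; ring
end

section
/- Fix a real number D > 0. Let (λ_k)_{k≥1} be the nondecreasing enumeration, counted with multiplicity, of the family of real numbers 16π²·(m² + m·n + n²)/(9D²) indexed by pairs (m, n) of positive integers; that is, λ_k is the k-th smallest member of this family counted with multiplicity. Then for every integer k with 1 ≤ k ≤ 100, one has λ_{k+1} − λ_k ≤ (64π²/(9D²))·√k. -/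
def gN (p : ℕ+ × ℕ+) : ℕ := (p.1 : ℕ) * (p.1 : ℕ) + (p.1 : ℕ) * (p.2 : ℕ) + (p.2 : ℕ) * (p.2 : ℕ)

def Ncount (v : ℕ) : ℕ :=
  ((Finset.Icc 1 14 ×ˢ Finset.Icc 1 14).filter
    (fun q : ℕ × ℕ => q.1 * q.1 + q.1 * q.2 + q.2 * q.2 ≤ v)).card

def muL : List ℕ :=
  [3, 7, 7, 12, 13, 13, 19, 19, 21, 21, 27, 28, 28, 31, 31, 37, 37, 39, 39, 43, 43, 48, 49, 49,
   52, 52, 57, 57, 61, 61, 63, 63, 67, 67, 73, 73, 75, 76, 76, 79, 79, 84, 84, 91, 91, 91, 91,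
   93, 93, 97, 97, 103, 103, 108, 109, 109, 111, 111, 112, 112, 117, 117, 124, 124, 127, 127,
   129, 129, 133, 133, 133, 133, 139, 139, 147, 147, 147, 148, 148, 151, 151, 156, 156, 157,
   157, 163, 163, 169, 169, 171, 171, 172, 172, 175, 175, 181, 181, 183, 183, 189, 189]

def muF (k : ℕ) : ℕ := muL.getD (k - 1) 0

lemma count_lemma (v : ℕ) (hv : v ≤ 200) :
    {p : ℕ+ × ℕ+ | (gN p : ℝ) ≤ (v : ℝ)}.encard = (Ncount v : ℕ∞) := by
  have hset : {p : ℕ+ × ℕ+ | (gN p : ℝ) ≤ (v : ℝ)} = {p : ℕ+ × ℕ+ | gN p ≤ v} := by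
    ext p; simp [Nat.cast_le]
  have hinj : Function.Injective (fun p : ℕ+ × ℕ+ => ((p.1 : ℕ), (p.2 : ℕ))) := by
    intro p q h
    simp only [Prod.mk.injEq] at h
    exact Prod.ext (PNat.coe_injective h.1) (PNat.coe_injective h.2)
  have himg : (fun p : ℕ+ × ℕ+ => ((p.1 : ℕ), (p.2 : ℕ))) '' {p : ℕ+ × ℕ+ | gN p ≤ v} =
      (((Finset.Icc 1 14 ×ˢ Finset.Icc 1 14).filter
        (fun q : ℕ × ℕ => q.1 * q.1 + q.1 * q.2 + q.2 * q.2 ≤ v)) : Finset (ℕ × ℕ)) := by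
    ext q
    simp only [Set.mem_image, Set.mem_setOf_eq, Finset.coe_filter, Finset.mem_product,
      Finset.mem_Icc, Set.mem_setOf_eq]
    constructor
    · rintro ⟨p, hp, rfl⟩
      have h1 : 1 ≤ (p.1 : ℕ) := p.1.one_le
      have h2 : 1 ≤ (p.2 : ℕ) := p.2.one_le
      have hg : (p.1 : ℕ) * (p.1 : ℕ) + (p.1 : ℕ) * (p.2 : ℕ) + (p.2 : ℕ) * (p.2 : ℕ) ≤ v := hp
      have hb1 : (p.1 : ℕ) ≤ 14 := by nlinarith
      have hb2 : (p.2 : ℕ) ≤ 14 := by nlinarith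
      exact ⟨⟨⟨h1, hb1⟩, ⟨h2, hb2⟩⟩, hg⟩
    · rintro ⟨⟨⟨h11, h12⟩, ⟨h21, h22⟩⟩, hle⟩
      exact ⟨(⟨q.1, h11⟩, ⟨q.2, h21⟩), hle, by simp⟩
  rw [hset, ← hinj.injOn.encard_image, himg,
    Set.encard_coe_eq_coe_finsetCard]
  rfl

lemma nu_val (k v : ℕ) (hv : v ≤ 200) (h1 : k ≤ Ncount v) (h2 : Ncount (v - 1) < k) :
    enumFamily (fun p : ℕ+ × ℕ+ => (gN p : ℝ)) k = (v : ℝ) := by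
  apply IsLeast.csInf_eq
  constructor
  · show (k : ℕ∞) ≤ _
    rw [count_lemma v hv]
    exact_mod_cast h1
  · intro t ht
    by_contra hlt
    push_neg at hlt
    have hsub : {p : ℕ+ × ℕ+ | (gN p : ℝ) ≤ t} ⊆
        {p : ℕ+ × ℕ+ | (gN p : ℝ) ≤ ((v - 1 : ℕ) : ℝ)} := by
      intro p hp
      have hpr : (gN p : ℝ) < (v : ℝ) := lt_of_le_of_lt hp hlt
      have hnat : gN p < v := by exact_mod_cast hpr
      have hle : gN p ≤ v - 1 := by omega
      show (gN p : ℝ) ≤ ((v - 1 : ℕ) : ℝ)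
      exact_mod_cast hle
    have hmono := Set.encard_le_encard hsub
    rw [count_lemma (v - 1) (by omega)] at hmono
    have hk : (k : ℕ∞) ≤ (Ncount (v - 1) : ℕ∞) := le_trans ht hmono
    have : k ≤ Ncount (v - 1) := by exact_mod_cast hk
    omega

lemma scale_lemma (C : ℝ) (hC : 0 < C) (k : ℕ) :
    enumFamily (fun p : ℕ+ × ℕ+ => C * (gN p : ℝ)) k =
      C * enumFamily (fun p : ℕ+ × ℕ+ => (gN p : ℝ)) k := by
  unfold enumFamily
  rw [← smul_eq_mul, ← Real.sInf_smul_of_nonneg hC.le]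
  congr 1
  ext t
  rw [Set.mem_smul_set_iff_inv_smul_mem₀ hC.ne']
  simp only [Set.mem_setOf_eq, smul_eq_mul]
  have hset : {p : ℕ+ × ℕ+ | (gN p : ℝ) ≤ C⁻¹ * t} = {p : ℕ+ × ℕ+ | C * (gN p : ℝ) ≤ t} := by
    ext p
    simp only [Set.mem_setOf_eq]
    rw [inv_mul_eq_div, le_div_iff₀ hC, mul_comm]
  rw [hset]

lemma sqrt_bound (d k : ℕ) (h : d * d ≤ 16 * k) : (d : ℝ) ≤ 4 * Real.sqrt k := by
  have h0 : (0 : ℝ) ≤ (k : ℝ) := Nat.cast_nonneg k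
  have hs := Real.sq_sqrt h0
  have hnn := Real.sqrt_nonneg (k : ℝ)
  have hr : (d : ℝ) * (d : ℝ) ≤ 16 * (k : ℝ) := by exact_mod_cast h
  nlinarith [Nat.cast_nonneg (α := ℝ) d]

set_option maxRecDepth 40000 in
lemma facts_lemma : ∀ k ∈ Finset.Icc 1 101,
    muF k ≤ 200 ∧ k ≤ Ncount (muF k) ∧ Ncount (muF k - 1) < k := by decide

set_option maxRecDepth 40000 in
lemma monot_lemma : ∀ k ∈ Finset.Icc 1 100,
    muF k ≤ muF (k + 1) ∧ (muF (k + 1) - muF k) * (muF (k + 1) - muF k) ≤ 16 * k := by decide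

/-- Section 7, equilateral triangle case: the Dirichlet eigenvalues of an equilateral
triangle of diameter `D` are `16π²(m² + mn + n²)/(9D²)` over pairs of positive
integers; for `1 ≤ k ≤ 100` the consecutive gap satisfies
`λ_{k+1} − λ_k ≤ (64π²/(9D²)) √k`. -/
theorem stmt_9 (D : ℝ) (hD : 0 < D)
    (lam : ℕ → ℝ)
    (hlam : ∀ k, lam k =
      enumFamily (fun p : ℕ+ × ℕ+ =>
        16 * Real.pi ^ 2 *
          (((p.1 : ℕ) : ℝ) ^ 2 + ((p.1 : ℕ) : ℝ) * ((p.2 : ℕ) : ℝ) + ((p.2 : ℕ) : ℝ) ^ 2)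
          / (9 * D ^ 2)) k) :
    ∀ k : ℕ, 1 ≤ k → k ≤ 100 →
      lam (k + 1) - lam k ≤ (64 * Real.pi ^ 2 / (9 * D ^ 2)) * Real.sqrt k := by
  intro k hk1 hk2
  set C : ℝ := 16 * Real.pi ^ 2 / (9 * D ^ 2) with hCdef
  have hC : 0 < C := by
    have := Real.pi_pos
    positivity
  have hf : (fun p : ℕ+ × ℕ+ =>
      16 * Real.pi ^ 2 *
        (((p.1 : ℕ) : ℝ) ^ 2 + ((p.1 : ℕ) : ℝ) * ((p.2 : ℕ) : ℝ) + ((p.2 : ℕ) : ℝ) ^ 2)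
        / (9 * D ^ 2)) = fun p : ℕ+ × ℕ+ => C * (gN p : ℝ) := by
    funext p
    simp only [gN, hCdef]
    push_cast
    ring
  have key : ∀ j, 1 ≤ j → j ≤ 101 → lam j = C * (muF j : ℝ) := by
    intro j h1 h2
    obtain ⟨a, b, c⟩ := facts_lemma j (Finset.mem_Icc.mpr ⟨h1, h2⟩)
    rw [hlam j, hf, scale_lemma C hC, nu_val j (muF j) a b c]
  obtain ⟨hmono, hsq⟩ := monot_lemma k (Finset.mem_Icc.mpr ⟨hk1, hk2⟩)
  have hd := sqrt_bound (muF (k + 1) - muF k) k hsq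
  have hcast : ((muF (k + 1) - muF k : ℕ) : ℝ) = (muF (k + 1) : ℝ) - (muF k : ℝ) :=
    Nat.cast_sub hmono
  rw [key k hk1 (by omega), key (k + 1) (by omega) (by omega)]
  have heq : 64 * Real.pi ^ 2 / (9 * D ^ 2) = 4 * C := by rw [hCdef]; ring
  rw [heq]
  have : C * (muF (k + 1) : ℝ) - C * (muF k : ℝ) = C * ((muF (k + 1) : ℝ) - (muF k : ℝ)) := by
    ring
  rw [this]
  calc C * ((muF (k + 1) : ℝ) - (muF k : ℝ)) ≤ C * (4 * Real.sqrt k) := by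
        apply mul_le_mul_of_nonneg_left _ hC.le
        rw [← hcast]; exact hd
    _ = 4 * C * Real.sqrt k := by ring
end
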